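/- Let G = (G_i)_{i∈ℕ} be an instance of the know-all model, r ≥ 1, and 1 ≤ k ≤ |Π|, with V^in = Π. If γ(G_{≤r}) > k, then there exists a logical obstruction to the solvability of SA_k by G_{≤r}: a positive formula φ ∈ L_D^+ with I[SA_k] ⊨ φ and I[G_{≤r}] ⊭ φ. In particular, SA_k is not solvable by G_{≤r} (there is no morphism I[G_{≤r}] → I[SA_k]). -/

import Mathlib

/-- A simplicial model: a pure chromatic simplicial complex, colored by the
agents in `Agent`, whose vertices are labeled by sets of atomic propositions.
Each atomic proposition belongs to an agent (`agentOf`), and the label of a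
vertex only contains atoms of the color of that vertex. -/
structure SimplicialModel (Agent Atom Vertex : Type) [Fintype Agent]
    [DecidableEq Vertex] where
  simplices : Set (Finset Vertex)
  chi : Vertex → Agent
  label : Vertex → Set Atom
  agentOf : Atom → Agent
  simplex_nonempty : ∀ X ∈ simplices, X.Nonempty
  down_closed : ∀ X ∈ simplices, ∀ Y : Finset Vertex, Y ⊆ X → Y.Nonempty → Y ∈ simplices
  chi_injOn : ∀ X ∈ simplices, Set.InjOn chi ↑X
  pure : ∀ X ∈ simplices, ∃ F ∈ simplices, X ⊆ F ∧ F.card = Fintype.card Agent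
  label_agent : ∀ v, ∀ p ∈ label v, agentOf p = chi v

namespace SimplicialModel

variable {Agent Atom Vertex Vertex' : Type} [Fintype Agent]
  [DecidableEq Vertex] [DecidableEq Vertex']

/-- The facets (maximal simplices) of a simplicial model: the simplices with
exactly `|Agent|` vertices. -/
def facets (M : SimplicialModel Agent Atom Vertex) : Set (Finset Vertex) :=
  {X ∈ M.simplices | X.card = Fintype.card Agent}

/-- The type of facets of a simplicial model. -/
def Facet (M : SimplicialModel Agent Atom Vertex) : Type := {X : Finset Vertex // X ∈ M.facets}

/-- The labeling of a facet: union of the labels of its vertices. -/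
def flabel (M : SimplicialModel Agent Atom Vertex) (X : M.Facet) : Set Atom :=
  ⋃ v ∈ (X.1 : Finset Vertex), M.label v

/-- `χ(X ∩ Y)`: the set of colors of the common vertices of two facets. -/
def chiInter (M : SimplicialModel Agent Atom Vertex) (X Y : M.Facet) : Set Agent :=
  M.chi '' ↑(X.1 ∩ Y.1)

/-- The indistinguishability relation `X ∼ₐ Y` : `a ∈ χ(X ∩ Y)`. -/
def indist (M : SimplicialModel Agent Atom Vertex) (a : Agent) (X Y : M.Facet) : Prop :=
  a ∈ M.chiInter X Y

/-- A morphism of simplicial models: maps simplices to simplices, preserves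
colors and preserves labels. -/
def IsMorphism (M : SimplicialModel Agent Atom Vertex) (M' : SimplicialModel Agent Atom Vertex')
    (f : Vertex → Vertex') : Prop :=
  (∀ X ∈ M.simplices, X.image f ∈ M'.simplices) ∧
  (∀ v, M'.chi (f v) = M.chi v) ∧
  (∀ v, M'.label (f v) = M.label v)

/-- Smart constructor for a simplicial model: the complex generated by a given
set of facets, each of which has `|Agent|` vertices with pairwise distinct colors. -/
def ofFacets [Nonempty Agent] (Fs : Set (Finset Vertex)) (chi : Vertex → Agent)
    (label : Vertex → Set Atom) (agentOf : Atom → Agent)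
    (hcard : ∀ F ∈ Fs, F.card = Fintype.card Agent)
    (hinj : ∀ F ∈ Fs, Set.InjOn chi ↑F)
    (hlab : ∀ v, ∀ p ∈ label v, agentOf p = chi v) :
    SimplicialModel Agent Atom Vertex where
  simplices := {X | X.Nonempty ∧ ∃ F ∈ Fs, X ⊆ F}
  chi := chi
  label := label
  agentOf := agentOf
  simplex_nonempty := fun _ hX => hX.1
  down_closed := by
    rintro X ⟨-, F, hF, hXF⟩ Y hYX hY
    exact ⟨hY, F, hF, hYX.trans hXF⟩
  chi_injOn := by
    rintro X ⟨-, F, hF, hXF⟩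
    exact (hinj F hF).mono (Finset.coe_subset.mpr hXF)
  pure := by
    rintro X ⟨-, F, hF, hXF⟩
    refine ⟨F, ⟨?_, F, hF, subset_rfl⟩, hXF, hcard F hF⟩
    rw [← Finset.card_pos, hcard F hF]
    exact Fintype.card_pos
  label_agent := hlab

end SimplicialModel

/-- The language `L_K⁺` of positive epistemic formulas:
`φ ::= p | ¬p | φ ∨ φ | φ ∧ φ | K_a φ`. -/
inductive PosFormula (Agent Atom : Type) : Type where
  | atom : Atom → PosFormula Agent Atom
  | natom : Atom → PosFormula Agent Atom
  | or : PosFormula Agent Atom → PosFormula Agent Atom → PosFormula Agent Atom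
  | and : PosFormula Agent Atom → PosFormula Agent Atom → PosFormula Agent Atom
  | know : Agent → PosFormula Agent Atom → PosFormula Agent Atom

/-- The language `L_D⁺` of positive epistemic formulas with distributed knowledge:
`φ ::= p | ¬p | φ ∨ φ | φ ∧ φ | D_A φ`. -/
inductive PosFormulaD (Agent Atom : Type) : Type where
  | atom : Atom → PosFormulaD Agent Atom
  | natom : Atom → PosFormulaD Agent Atom
  | or : PosFormulaD Agent Atom → PosFormulaD Agent Atom → PosFormulaD Agent Atom
  | and : PosFormulaD Agent Atom → PosFormulaD Agent Atom → PosFormulaD Agent Atom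
  | dknow : Set Agent → PosFormulaD Agent Atom → PosFormulaD Agent Atom

namespace SimplicialModel

variable {Agent Atom Vertex Vertex' : Type} [Fintype Agent]
  [DecidableEq Vertex] [DecidableEq Vertex']

/-- Truth of a positive formula of `L_K⁺` at a facet of a simplicial model. -/
def satK (M : SimplicialModel Agent Atom Vertex) :
    PosFormula Agent Atom → M.Facet → Prop
  | .atom p, X => p ∈ M.flabel X
  | .natom p, X => p ∉ M.flabel X
  | .or φ ψ, X => M.satK φ X ∨ M.satK ψ X
  | .and φ ψ, X => M.satK φ X ∧ M.satK ψ X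
  | .know a φ, X => ∀ Y : M.Facet, M.indist a X Y → M.satK φ Y

/-- Truth of a positive formula of `L_D⁺` at a facet of a simplicial model. -/
def satD (M : SimplicialModel Agent Atom Vertex) :
    PosFormulaD Agent Atom → M.Facet → Prop
  | .atom p, X => p ∈ M.flabel X
  | .natom p, X => p ∉ M.flabel X
  | .or φ ψ, X => M.satD φ X ∨ M.satD ψ X
  | .and φ ψ, X => M.satD φ X ∧ M.satD ψ X
  | .dknow A φ, X => ∀ Y : M.Facet, A ⊆ M.chiInter X Y → M.satD φ Y

/-- A K-simulation of `M` by `M'`: (Atom) related facets have the same labels;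
(Forth) if `X R X'` and `X ∼ₐ Y` then there is `Y'` with `Y R Y'` and `X' ∼ₐ Y'`. -/
def IsKSimulation (M : SimplicialModel Agent Atom Vertex) (M' : SimplicialModel Agent Atom Vertex')
    (R : M.Facet → M'.Facet → Prop) : Prop :=
  (∀ X X', R X X' → M.flabel X = M'.flabel X') ∧
  (∀ (a : Agent) X Y X', R X X' → M.indist a X Y →
    ∃ Y', R Y Y' ∧ M'.indist a X' Y')

/-- A D-simulation of `M` by `M'`: (Atom) related facets have the same labels;
(D-Forth) if `X R X'` then for every facet `Y` there is `Y'` with `Y R Y'` and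
`χ(X ∩ Y) ⊆ χ'(X' ∩ Y')`. -/
def IsDSimulation (M : SimplicialModel Agent Atom Vertex) (M' : SimplicialModel Agent Atom Vertex')
    (R : M.Facet → M'.Facet → Prop) : Prop :=
  (∀ X X', R X X' → M.flabel X = M'.flabel X') ∧
  (∀ X X', R X X' → ∀ Y, ∃ Y', R Y Y' ∧ M.chiInter X Y ⊆ M'.chiInter X' Y')

/-- A relation on facets is total if every facet of `M` is related to some facet of `M'`. -/
def TotalRel (M : SimplicialModel Agent Atom Vertex) (M' : SimplicialModel Agent Atom Vertex')
    (R : M.Facet → M'.Facet → Prop) : Prop :=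
  ∀ X, ∃ X', R X X'

end SimplicialModel

/-- An ordered partition of the set of agents: a sequence
`∅ ≠ C₁ ⊊ C₂ ⊊ ⋯ ⊊ C_l = Π`. -/
structure OrderedPartition (Agent : Type) [Fintype Agent] [DecidableEq Agent] where
  parts : List (Finset Agent)
  ne : parts ≠ []
  head_nonempty : (parts.head ne).Nonempty
  chain : parts.Chain' (· ⊂ ·)
  last_univ : parts.getLast ne = Finset.univ

namespace OrderedPartition

variable {Agent : Type} [Fintype Agent] [DecidableEq Agent]

/-- `C_{min {j : a ∈ C_j}}`: the first component of the ordered partition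
containing the agent `a` (it exists since the last component is `Π`). -/
def myPart (γ : OrderedPartition Agent) (a : Agent) : Finset Agent :=
  (γ.parts.find? (fun C => decide (a ∈ C))).getD Finset.univ

end OrderedPartition

/-- `Views r`: the possible views after communicating `r` times.
`Views 0 = V^in` and `Views (r+1)` consists of sets of pairs of an agent and a
view in `Views r`. -/
def Views (Agent Value : Type) : ℕ → Type
  | 0 => Value
  | r + 1 => Set (Agent × Views Agent Value r)

/-- `view^r_a(I, γ₁, …, γ_r)`: the view of agent `a` after `r` rounds of
immediate snapshot from the input facet `I` (given by `i : Agent → Value`),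
scheduled by the ordered partitions `γ₁, …, γ_r`. -/
def view {Agent Value : Type} [Fintype Agent] [DecidableEq Agent] (i : Agent → Value) :
    (r : ℕ) → (Fin r → OrderedPartition Agent) → Agent → Views Agent Value r
  | 0, _, a => i a
  | r + 1, γ, a =>
      {x | ∃ p ∈ (γ (Fin.last r)).myPart a,
        x = (p, view i r (fun j => γ j.castSucc) p)}

/-- The flattening map `car : Views^{r+1} → Views^1`:
`car(w) = w` for `w ∈ Views^1`, and `car(w) = ⋃_{(p,v) ∈ w} car(v)` otherwise. -/
def car {Agent Value : Type} : (r : ℕ) → Views Agent Value (r + 1) → Set (Agent × Value)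
  | 0, w => w
  | r + 1, w => {q | ∃ x ∈ (show Set (Agent × Views Agent Value (r + 1)) from w),
      q ∈ car r x.2}

attribute [local instance] Classical.decEq

noncomputable section

variable (Agent : Type) [Fintype Agent] [DecidableEq Agent] [Nonempty Agent]

/-- The facets of the product update `I[SA_k]` of the input model with the
`k`-set agreement task (with `V^in = V^out = Agent`): a vertex `(a, i, d)`
records agent `a`'s input `i` and decision `d`.  A facet is determined by an
input assignment `i` and a decision map `d` with `|d(Π)| ≤ k` whose decided
values all appear among the inputs (the precondition of the task). -/
def SAfacets (k : ℕ) : Set (Finset (Agent × Agent × Agent)) :=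
  {X | ∃ i d : Agent → Agent,
    (Finset.univ.image d).card ≤ k ∧ (∀ a : Agent, ∃ b : Agent, i b = d a) ∧
    X = Finset.univ.image (fun a => (a, i a, d a))}

/-- The product update `I[SA_k]` as a simplicial model.  Atomic propositions
are `ip_a^v ≅ (a, v) : Agent × Agent`; the label of `(a, i, d)` is `{ip_a^i}`. -/
def ISA (k : ℕ) : SimplicialModel Agent (Agent × Agent) (Agent × Agent × Agent) :=
  SimplicialModel.ofFacets (SAfacets Agent k) (fun v => v.1) (fun v => {(v.1, v.2.1)})
    Prod.fst
    (by
      rintro F ⟨i, d, -, -, rfl⟩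
      rw [Finset.card_image_of_injective _
        (fun a b h => congrArg Prod.fst h : Function.Injective fun a => (a, i a, d a))]
      exact Finset.card_univ)
    (by
      rintro F ⟨i, d, -, -, rfl⟩ x hx y hy hxy
      simp only [Finset.coe_image, Set.mem_image, Finset.mem_coe] at hx hy
      obtain ⟨a, -, rfl⟩ := hx
      obtain ⟨b, -, rfl⟩ := hy
      exact congrArg (fun c => (c, i c, d c)) hxy)
    (by
      rintro v p hp
      rw [Set.mem_singleton_iff] at hp
      subst hp
      rfl)

/-- The facets of the product update `I[IS^r]` of the input model with the
`r`-iterated immediate snapshot protocol: a vertex `(a, i, v)` records agent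
`a`'s input `i` and its view `v` after `r` rounds; a facet is determined by an
input assignment and a sequence of `r` ordered partitions. -/
def ISfacets (r : ℕ) : Set (Finset (Agent × Agent × Views Agent Agent r)) :=
  {X | ∃ (i : Agent → Agent) (γ : Fin r → OrderedPartition Agent),
    X = Finset.univ.image (fun a => (a, i a, view i r γ a))}

/-- The product update `I[IS^r]` as a simplicial model. -/
def IIS (r : ℕ) :
    SimplicialModel Agent (Agent × Agent) (Agent × Agent × Views Agent Agent r) :=
  SimplicialModel.ofFacets (ISfacets Agent r) (fun v => v.1) (fun v => {(v.1, v.2.1)})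
    Prod.fst
    (by
      rintro F ⟨i, γ, rfl⟩
      rw [Finset.card_image_of_injective _
        (fun a b h => congrArg Prod.fst h :
          Function.Injective fun a => (a, i a, view i r γ a))]
      exact Finset.card_univ)
    (by
      rintro F ⟨i, γ, rfl⟩ x hx y hy hxy
      simp only [Finset.coe_image, Set.mem_image, Finset.mem_coe] at hx hy
      obtain ⟨a, -, rfl⟩ := hx
      obtain ⟨b, -, rfl⟩ := hy
      exact congrArg (fun c => (c, i c, view i r γ c)) hxy)
    (by
      rintro v p hp
      rw [Set.mem_singleton_iff] at hp
      subst hp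
      rfl)

end

/-- A directed communication graph on the set of agents; every node has a
self-loop. `E p q` means `(p, q)` is an edge. -/
structure CommGraph (Agent : Type) where
  E : Agent → Agent → Prop
  self_loop : ∀ p, E p p

namespace CommGraph

variable {Agent : Type}

/-- The set of in-neighbors of `p`: `In(p, G) = {q : (p, q) ∈ E(G)}`. -/
def In (G : CommGraph Agent) (p : Agent) : Set Agent := {q | G.E p q}

/-- The set of out-neighbors of `p`: `Out(p, G) = {q : (q, p) ∈ E(G)}`. -/
def Out (G : CommGraph Agent) (p : Agent) : Set Agent := {q | G.E q p}

/-- Out-neighbors of a set of agents. -/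
def OutS (G : CommGraph Agent) (P : Set Agent) : Set Agent := ⋃ p ∈ P, G.Out p

/-- Composition of graphs: `(p, q) ∈ E(H ∘ G)` iff `Out(p, G) ∩ In(q, H) ≠ ∅`. -/
def comp (H G : CommGraph Agent) : CommGraph Agent where
  E := fun p q => (G.Out p ∩ H.In q).Nonempty
  self_loop := fun p => ⟨p, G.self_loop p, H.self_loop p⟩

/-- The domination number `γ(G)`: the least size of a set `P` of agents with
`Out(P, G) = Π`. -/
noncomputable def domination [Fintype Agent] (G : CommGraph Agent) : ℕ :=
  sInf {i | ∃ P : Finset Agent, P.card = i ∧ G.OutS ↑P = Set.univ}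

/-- `G_{≤r} = G_r ∘ (G_{r-1} ∘ (⋯ (G₂ ∘ G₁) ⋯))`. -/
def upTo (G : ℕ → CommGraph Agent) : ℕ → CommGraph Agent
  | 0 => G 0
  | 1 => G 1
  | r + 2 => (G (r + 2)).comp (upTo G (r + 1))

end CommGraph

noncomputable section

variable (Agent : Type) [Fintype Agent] [DecidableEq Agent] [Nonempty Agent]

/-- The facets of the product update `I[G_{≤r}]` of the input model with the
protocol associated with a know-all instance: a vertex `(a, i, v)` records the
input `i` of agent `a` and its view `v = {(p, input p) : p ∈ In(a, G_{≤r})}`. -/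
def KAfacets (G : CommGraph Agent) :
    Set (Finset (Agent × Agent × Set (Agent × Agent))) :=
  {X | ∃ input : Agent → Agent,
    X = Finset.univ.image fun a =>
      (a, input a, {x | ∃ p ∈ G.In a, x = (p, input p)})}

/-- The product update `I[G_{≤r}]` as a simplicial model (for `V^in = Π`). -/
def KAmodel (G : CommGraph Agent) :
    SimplicialModel Agent (Agent × Agent) (Agent × Agent × Set (Agent × Agent)) :=
  SimplicialModel.ofFacets (KAfacets Agent G) (fun v => v.1) (fun v => {(v.1, v.2.1)})
    Prod.fst
    (by
      rintro F ⟨input, rfl⟩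
      rw [Finset.card_image_of_injective _
        (fun a b h => congrArg Prod.fst h : Function.Injective fun a =>
          (a, input a, {x | ∃ p ∈ G.In a, x = (p, input p)}))]
      exact Finset.card_univ)
    (by
      rintro F ⟨input, rfl⟩ x hx y hy hxy
      simp only [Finset.coe_image, Set.mem_image, Finset.mem_coe] at hx hy
      obtain ⟨a, -, rfl⟩ := hx
      obtain ⟨b, -, rfl⟩ := hy
      exact congrArg
        (fun c => (c, input c, {x | ∃ p ∈ G.In c, x = (p, input p)})) hxy)
    (by
      rintro v p hp
      rw [Set.mem_singleton_iff] at hp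
      subst hp
      rfl)

end

/-! The obstruction is `⋁_{|P| ≤ k} ⋀_{q ∈ Π} D_{q} ⋁_{b ∈ Π, v ∈ P} ip_b^v`: some set of at most
`k` values is known by every agent to contain an input. It holds in `I[SA_k]` with `P` the set of
decided values, since each agent's decision is the input of some agent. It fails in `I[G_{≤r}]` at
the facet where every agent's input is its own name: for `|P| ≤ k < γ(G_{≤r})` some agent `q` is
not dominated by `P`, so `q` cannot distinguish this facet from the one where every agent of `P`
has input `q`, and there no input lies in `P`. Morphisms reflect positive formulas, so there is no
morphism `I[G_{≤r}] → I[SA_k]`. -/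

namespace PosFormulaD

variable {Agent Atom ι : Type}

/-- The positive language has no constants: `⊥` and `⊤` are written with an arbitrary atom. -/
def bot (p : Atom) : PosFormulaD Agent Atom := .and (.atom p) (.natom p)

def top (p : Atom) : PosFormulaD Agent Atom := .or (.atom p) (.natom p)

noncomputable def bigOr (p : Atom) (s : Finset ι) (f : ι → PosFormulaD Agent Atom) :
    PosFormulaD Agent Atom :=
  (s.toList.map f).foldr .or (bot p)

noncomputable def bigAnd (p : Atom) (s : Finset ι) (f : ι → PosFormulaD Agent Atom) :
    PosFormulaD Agent Atom :=
  (s.toList.map f).foldr .and (top p)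

end PosFormulaD

namespace SimplicialModel

variable {Agent Atom Vertex Vertex' ι : Type} [Fintype Agent]
  [DecidableEq Vertex] [DecidableEq Vertex']

section Semantics

variable (M : SimplicialModel Agent Atom Vertex) (X : M.Facet)

theorem satD_bot (p : Atom) : ¬ M.satD (.bot p) X := by
  simp [satD, PosFormulaD.bot]

theorem satD_top (p : Atom) : M.satD (.top p) X := by
  simp [satD, PosFormulaD.top, em]

theorem satD_bigOr (p : Atom) (s : Finset ι) (f : ι → PosFormulaD Agent Atom) :
    M.satD (.bigOr p s f) X ↔ ∃ i ∈ s, M.satD (f i) X := by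
  suffices ∀ l : List ι, M.satD ((l.map f).foldr .or (.bot p)) X ↔ ∃ i ∈ l, M.satD (f i) X by
    simpa [PosFormulaD.bigOr] using this s.toList
  intro l
  induction l with
  | nil => simpa using M.satD_bot X p
  | cons i l ih => simp [satD, ih]

theorem satD_bigAnd (p : Atom) (s : Finset ι) (f : ι → PosFormulaD Agent Atom) :
    M.satD (.bigAnd p s f) X ↔ ∀ i ∈ s, M.satD (f i) X := by
  suffices ∀ l : List ι, M.satD ((l.map f).foldr .and (.top p)) X ↔ ∀ i ∈ l, M.satD (f i) X by
    simpa [PosFormulaD.bigAnd] using this s.toList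
  intro l
  induction l with
  | nil => simpa using M.satD_top X p
  | cons i l ih => simp [satD, ih]

end Semantics

theorem ofFacets_facets [Nonempty Agent] {Fs : Set (Finset Vertex)} {chi : Vertex → Agent}
    {label : Vertex → Set Atom} {agentOf : Atom → Agent}
    {hcard : ∀ F ∈ Fs, F.card = Fintype.card Agent} {hinj : ∀ F ∈ Fs, Set.InjOn chi ↑F}
    {hlab : ∀ v, ∀ p ∈ label v, agentOf p = chi v} :
    (ofFacets Fs chi label agentOf hcard hinj hlab).facets = Fs := by
  ext X
  constructor
  · rintro ⟨⟨-, F, hF, hXF⟩, hc⟩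
    rwa [Finset.eq_of_subset_of_card_le hXF (by rw [hc, hcard F hF])]
  · intro hX
    refine ⟨⟨?_, X, hX, subset_rfl⟩, hcard X hX⟩
    rw [← Finset.card_pos, hcard X hX]
    exact Fintype.card_pos

theorem satD_of_satD_map {M : SimplicialModel Agent Atom Vertex}
    {M' : SimplicialModel Agent Atom Vertex'} (F : M.Facet → M'.Facet)
    (hlabel : ∀ X, M'.flabel (F X) = M.flabel X)
    (hchi : ∀ X Y, M.chiInter X Y ⊆ M'.chiInter (F X) (F Y)) (φ : PosFormulaD Agent Atom) :
    ∀ X, M'.satD φ (F X) → M.satD φ X := by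
  induction φ with
  | atom p => intro X h; rwa [satD, ← hlabel]
  | natom p => intro X h; rwa [satD, ← hlabel]
  | or φ ψ ihφ ihψ => exact fun X h => h.imp (ihφ X) (ihψ X)
  | and φ ψ ihφ ihψ => exact fun X h => ⟨ihφ X h.1, ihψ X h.2⟩
  | dknow A φ ih => exact fun X h Y hAY => ih Y (h (F Y) (hAY.trans (hchi X Y)))

namespace IsMorphism

variable {M : SimplicialModel Agent Atom Vertex} {M' : SimplicialModel Agent Atom Vertex'}
  {f : Vertex → Vertex'}

theorem image_mem_facets (hf : M.IsMorphism M' f) (X : M.Facet) :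
    X.1.image f ∈ M'.facets := by
  have hinj : Set.InjOn f X.1 := fun x hx y hy hxy =>
    M.chi_injOn X.1 X.2.1 hx hy (by rw [← hf.2.1 x, ← hf.2.1 y, hxy])
  exact ⟨hf.1 X.1 X.2.1, (Finset.card_image_of_injOn hinj).trans X.2.2⟩

def mapFacet (hf : M.IsMorphism M' f) (X : M.Facet) : M'.Facet :=
  ⟨X.1.image f, hf.image_mem_facets X⟩

theorem flabel_mapFacet (hf : M.IsMorphism M' f) (X : M.Facet) :
    M'.flabel (hf.mapFacet X) = M.flabel X := by
  simp only [flabel, mapFacet, Finset.mem_image, Set.iUnion_exists, Set.biUnion_and',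
    Set.iUnion_iUnion_eq_right, hf.2.2]

theorem chiInter_subset_chiInter_mapFacet (hf : M.IsMorphism M' f) (X Y : M.Facet) :
    M.chiInter X Y ⊆ M'.chiInter (hf.mapFacet X) (hf.mapFacet Y) := by
  rintro a ⟨v, hv, rfl⟩
  rw [Finset.coe_inter, Set.mem_inter_iff] at hv
  refine ⟨f v, ?_, hf.2.1 v⟩
  simp only [mapFacet, Finset.coe_inter, Finset.coe_image]
  exact ⟨Set.mem_image_of_mem f hv.1, Set.mem_image_of_mem f hv.2⟩

theorem satD_of_forall_satD (hf : M.IsMorphism M' f) {φ : PosFormulaD Agent Atom}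
    (h : ∀ X', M'.satD φ X') (X : M.Facet) : M.satD φ X :=
  satD_of_satD_map hf.mapFacet hf.flabel_mapFacet hf.chiInter_subset_chiInter_mapFacet φ X
    (h _)

end IsMorphism

section ImageFacets

variable {β γ δ : Type}

theorem mem_chiInter_iff_of_image [DecidableEq (Agent × β)]
    {M : SimplicialModel Agent Atom (Agent × β)} (hchi : ∀ v, M.chi v = v.1)
    {X Y : M.Facet} {s t : Agent → β} (hX : X.1 = Finset.univ.image fun a => (a, s a))
    (hY : Y.1 = Finset.univ.image fun a => (a, t a)) (a : Agent) :
    a ∈ M.chiInter X Y ↔ s a = t a := by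
  simp only [chiInter, hX, hY, Finset.coe_inter, Finset.coe_image, Finset.coe_univ,
    Set.image_univ, Set.mem_image, Set.mem_inter_iff, Set.mem_range, hchi]
  constructor
  · rintro ⟨-, ⟨⟨b, rfl⟩, ⟨c, hc⟩⟩, rfl⟩
    obtain ⟨rfl, hst⟩ := Prod.ext_iff.1 hc
    exact hst.symm
  · intro h
    exact ⟨(a, s a), ⟨⟨a, rfl⟩, a, by rw [h]⟩, rfl⟩

theorem mem_flabel_iff_of_image [DecidableEq (Agent × γ × δ)]
    {M : SimplicialModel Agent (Agent × γ) (Agent × γ × δ)}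
    (hlabel : ∀ v, M.label v = {(v.1, v.2.1)}) {X : M.Facet} {i : Agent → γ}
    {w : Agent → δ} (hX : X.1 = Finset.univ.image fun a => (a, i a, w a)) (b : Agent) (v : γ) :
    (b, v) ∈ M.flabel X ↔ i b = v := by
  simp only [flabel, hX, hlabel, Finset.mem_image, Finset.mem_univ, true_and,
    Set.iUnion_exists, Set.iUnion_iUnion_eq', Set.mem_iUnion, Set.mem_singleton_iff,
    Prod.mk.injEq]
  constructor
  · rintro ⟨a, rfl, h⟩
    exact h.symm
  · exact fun h => ⟨b, rfl, h.symm⟩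

end ImageFacets

end SimplicialModel

theorem CommGraph.exists_notMem_OutS_of_card_lt_domination {Agent : Type} [Fintype Agent]
    (G : CommGraph Agent) {P : Finset Agent} (hP : P.card < G.domination) :
    ∃ q, q ∉ G.OutS P := by
  by_contra! h
  exact hP.not_ge (Nat.sInf_le ⟨P, rfl, Set.eq_univ_of_forall h⟩)

section KnowAll

open SimplicialModel CommGraph PosFormulaD

variable {Agent : Type} [Fintype Agent] [DecidableEq Agent] [Nonempty Agent]

noncomputable def KAfacet (H : CommGraph Agent) (input : Agent → Agent) :
    (KAmodel Agent H).Facet :=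
  ⟨Finset.univ.image fun a => (a, input a, {x | ∃ p ∈ H.In a, x = (p, input p)}),
    by rw [KAmodel, ofFacets_facets]; exact ⟨input, rfl⟩⟩

theorem mem_flabel_KAfacet (H : CommGraph Agent) (input : Agent → Agent) (b v : Agent) :
    (b, v) ∈ (KAmodel Agent H).flabel (KAfacet H input) ↔ input b = v :=
  mem_flabel_iff_of_image (fun _ => rfl) rfl b v

theorem mem_chiInter_KAfacet_of_eqOn (H : CommGraph Agent) {i i' : Agent → Agent} {q : Agent}
    (h : Set.EqOn i i' (H.In q)) :
    q ∈ (KAmodel Agent H).chiInter (KAfacet H i) (KAfacet H i') := by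
  rw [mem_chiInter_iff_of_image (fun _ => rfl) rfl rfl, Prod.mk.injEq]
  refine ⟨h (H.self_loop q), ?_⟩
  ext x
  constructor <;> rintro ⟨p, hp, rfl⟩ <;> exact ⟨p, hp, by rw [h hp]⟩

noncomputable def someInputIn (a₀ : Agent) (P : Finset Agent) :
    PosFormulaD Agent (Agent × Agent) :=
  bigOr (a₀, a₀) (Finset.univ ×ˢ P) .atom

noncomputable def saObstruction (a₀ : Agent) (k : ℕ) : PosFormulaD Agent (Agent × Agent) :=
  bigOr (a₀, a₀) (Finset.univ.filter fun P : Finset Agent => P.card ≤ k) fun P =>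
    bigAnd (a₀, a₀) Finset.univ fun q => .dknow {q} (someInputIn a₀ P)

theorem ISA_satD_saObstruction (a₀ : Agent) (k : ℕ) (X : (ISA Agent k).Facet) :
    (ISA Agent k).satD (saObstruction a₀ k) X := by
  obtain ⟨i, d, hdk, -, hX⟩ : X.1 ∈ SAfacets Agent k := by
    simpa [ISA, ofFacets_facets] using X.2
  rw [saObstruction, satD_bigOr]
  refine ⟨Finset.univ.image d, Finset.mem_filter.2 ⟨Finset.mem_univ _, hdk⟩, ?_⟩
  rw [satD_bigAnd]
  intro q _ Y hqY
  obtain ⟨i', d', -, hval', hY⟩ : Y.1 ∈ SAfacets Agent k := by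
    simpa [ISA, ofFacets_facets] using Y.2
  have hdq : d q = d' q :=
    (Prod.ext_iff.1 ((mem_chiInter_iff_of_image (fun _ => rfl) hX hY q).1
      (hqY (Set.mem_singleton q)))).2
  obtain ⟨b, hb⟩ := hval' q
  rw [someInputIn, satD_bigOr]
  refine ⟨(b, d q), Finset.mem_product.2 ⟨Finset.mem_univ b, Finset.mem_image_of_mem d
    (Finset.mem_univ q)⟩, ?_⟩
  exact (mem_flabel_iff_of_image (fun _ => rfl) hY b (d q)).2 (hb.trans hdq.symm)

theorem KAmodel_not_satD_saObstruction (a₀ : Agent) {k : ℕ} {H : CommGraph Agent}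
    (hdom : k < H.domination) :
    ¬ (KAmodel Agent H).satD (saObstruction a₀ k) (KAfacet H id) := by
  rw [saObstruction, satD_bigOr]
  rintro ⟨P, hP, hsat⟩
  obtain ⟨q, hq⟩ := H.exists_notMem_OutS_of_card_lt_domination
    ((Finset.mem_filter.1 hP).2.trans_lt hdom)
  have hqIn : ∀ p ∈ P, p ∉ H.In q := fun p hp hpq => hq (Set.mem_biUnion hp hpq)
  have hqP : q ∉ P := fun h => hqIn q h (H.self_loop q)
  set i' : Agent → Agent := fun p => if p ∈ P then q else p
  have hi' : ∀ b, i' b ∉ P := fun b => by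
    by_cases hb : b ∈ P <;> simp [i', hb, hqP]
  have hagree : Set.EqOn id i' (H.In q) := fun p hp => by
    simp [i', show p ∉ P from fun h => hqIn p h hp]
  rw [satD_bigAnd] at hsat
  have hqknows := hsat q (Finset.mem_univ q) (KAfacet H i')
    (Set.singleton_subset_iff.2 (mem_chiInter_KAfacet_of_eqOn H hagree))
  obtain ⟨⟨b, v⟩, hbv, hlab⟩ := (satD_bigOr _ _ _ _ _).1 hqknows
  exact hi' b (((mem_flabel_KAfacet H i' b v).1 hlab) ▸ (Finset.mem_product.1 hbv).2)

end KnowAll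

open SimplicialModel CommGraph in
theorem knowall_obstruction_and_unsolvability_general
    {Agent : Type} [Fintype Agent] [DecidableEq Agent] [Nonempty Agent]
    (G : ℕ → CommGraph Agent) (r k : ℕ)
    (hdom : k < (upTo G r).domination) :
    (∃ φ : PosFormulaD Agent (Agent × Agent),
      (∀ X' : (ISA Agent k).Facet, (ISA Agent k).satD φ X') ∧
      ¬ (∀ X : (KAmodel Agent (upTo G r)).Facet,
          (KAmodel Agent (upTo G r)).satD φ X)) ∧
    ¬ ∃ f : (Agent × Agent × Set (Agent × Agent)) → (Agent × Agent × Agent),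
      SimplicialModel.IsMorphism (KAmodel Agent (upTo G r)) (ISA Agent k) f := by
  obtain ⟨a₀⟩ := ‹Nonempty Agent›
  have hvalid := ISA_satD_saObstruction a₀ k
  have hinvalid : ¬ ∀ X, (KAmodel Agent (upTo G r)).satD (saObstruction a₀ k) X :=
    fun h => KAmodel_not_satD_saObstruction a₀ hdom (h _)
  exact ⟨⟨_, hvalid, hinvalid⟩, fun ⟨_, hf⟩ => hinvalid (hf.satD_of_forall_satD hvalid)⟩

open SimplicialModel CommGraph in
/-- Know-all model: if `γ(G_{≤r}) > k`, then there exists a logical obstruction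
to the solvability of `SA_k` by `G_{≤r}`: a positive formula `φ ∈ L_D⁺` with
`I[SA_k] ⊨ φ` and `I[G_{≤r}] ⊭ φ`.  In particular, `SA_k` is not solvable by
`G_{≤r}`: there is no morphism `I[G_{≤r}] → I[SA_k]`. -/
theorem knowall_obstruction_and_unsolvability
    {Agent : Type} [Fintype Agent] [DecidableEq Agent] [Nonempty Agent]
    (G : ℕ → CommGraph Agent) (r k : ℕ) (hr : 1 ≤ r)
    (hk : 1 ≤ k) (hk' : k ≤ Fintype.card Agent)
    (hdom : k < (upTo G r).domination) :
    (∃ φ : PosFormulaD Agent (Agent × Agent),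
      (∀ X' : (ISA Agent k).Facet, (ISA Agent k).satD φ X') ∧
      ¬ (∀ X : (KAmodel Agent (upTo G r)).Facet,
          (KAmodel Agent (upTo G r)).satD φ X)) ∧
    ¬ ∃ f : (Agent × Agent × Set (Agent × Agent)) → (Agent × Agent × Agent),
      SimplicialModel.IsMorphism (KAmodel Agent (upTo G r)) (ISA Agent k) f :=
  knowall_obstruction_and_unsolvability_general G r k hdom
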